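/- arXiv:1108.5406 — 11 statements merged into one kernel-verified Lean document; each statement's English description precedes it below -/
import Mathlib

section
/- For a positive integer n, every group with exactly n elements is cyclic if and only if n and φ(n) are coprime. -/
/-!
If `n` is not coprime to `φ n`, then either `p * p ∣ n` for a prime `p`, or `q * p ∣ n` for primes
with `p ∣ q - 1`. In the first case `(ℤ/p)² × ℤ/(n/p²)` is a non-cyclic group of order `n`; in the
second, `Aut(ℤ/q) ≅ (ℤ/q)ˣ` has an element of order `p`, giving a non-abelian `ℤ/q ⋊ ℤ/p`, and we
take its product with `ℤ/(n/pq)`.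

Conversely, coprimality forces `n` to be squarefree, so a group of order `n` is a Z-group, i.e. a
semidirect product `N ⋊ H` of cyclic groups of coprime orders. The action is a homomorphism from `H`
to `Aut N`, whose order `φ |N|` divides `φ n` and so is coprime to `|H|`: it is trivial, and
`G ≅ N × H` is cyclic.
-/

namespace Nat

theorem Prime.dvd_totient_of_mul_self_dvd {p n : ℕ} (hp : p.Prime) (h : p * p ∣ n) : p ∣ φ n :=
  (totient_mul_of_prime_of_dvd hp dvd_rfl ▸ dvd_mul_right p _).trans (totient_dvd_of_dvd h)

theorem squarefree_of_coprime_totient {n : ℕ} (h : n.Coprime (φ n)) : Squarefree n := by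
  refine squarefree_iff_prime_squarefree.mpr fun p hp hpn ↦ hp.one_lt.ne' ?_
  exact eq_one_of_dvd_coprimes h ((dvd_mul_right p p).trans hpn)
    (hp.dvd_totient_of_mul_self_dvd hpn)

theorem totient_eq_prod_primeFactors_of_squarefree {n : ℕ} (h : Squarefree n) :
    φ n = ∏ p ∈ n.primeFactors, (p - 1) := by
  have := totient_mul_prod_primeFactors n
  rw [prod_primeFactors_of_squarefree h, mul_comm] at this
  exact mul_left_cancel₀ h.ne_zero this

theorem exists_primes_of_not_coprime_totient {n : ℕ} (h : ¬ n.Coprime (φ n)) :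
    (∃ p, p.Prime ∧ p * p ∣ n) ∨ ∃ p q, p.Prime ∧ q.Prime ∧ p ∣ q - 1 ∧ q * p ∣ n := by
  by_cases hsq : Squarefree n
  swap
  · rw [squarefree_iff_prime_squarefree] at hsq
    push Not at hsq
    exact Or.inl hsq
  obtain ⟨p, hp, hpn, hpφ⟩ := Prime.not_coprime_iff_dvd.mp h
  rw [totient_eq_prod_primeFactors_of_squarefree hsq] at hpφ
  obtain ⟨q, hq, hpq⟩ := hp.prime.exists_mem_finset_dvd hpφ
  obtain ⟨hq, hqn, -⟩ := mem_primeFactors.mp hq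
  have hne : q ≠ p := by
    rintro rfl
    have := hq.two_le
    have := le_of_dvd (by omega) hpq
    omega
  exact Or.inr ⟨p, q, hp, hq, hpq,
    ((coprime_primes hq hp).mpr hne).mul_dvd_of_dvd_of_dvd hqn hpn⟩

end Nat

theorem MonoidHom.eq_one_of_coprime_card {G H : Type*} [Group G] [Group H] [Finite G] [Finite H]
    (f : G →* H) (h : (Nat.card G).Coprime (Nat.card H)) : f = 1 := by
  ext g
  rw [one_apply, ← orderOf_eq_one_iff]
  exact Nat.eq_one_of_dvd_coprimes h ((orderOf_map_dvd f g).trans (orderOf_dvd_natCard g))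
    (orderOf_dvd_natCard (f g))

theorem isCyclic_of_coprime_card_totient {G : Type*} [Group G] [Finite G]
    (h : (Nat.card G).Coprime (Nat.card G).totient) : IsCyclic G := by
  have := IsZGroup.of_squarefree (Nat.squarefree_of_coprime_totient h)
  obtain ⟨N, H, φ, e, hH, hN, hNH⟩ := isZGroup_iff_exists_mulEquiv.mp this
  obtain rfl : φ = 1 := φ.eq_one_of_coprime_card <| by
    rw [IsCyclic.card_mulAut]
    exact (h.coprime_dvd_right (Nat.totient_dvd_of_dvd N.card_subgroup_dvd_card)).coprime_dvd_left
      H.card_subgroup_dvd_card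
  have : IsCyclic (N × H) := Group.isCyclic_prod_iff.mpr ⟨hN, hH, hNH⟩
  exact (e.trans SemidirectProduct.mulEquivProd).symm.isCyclic.mp this

theorem SemidirectProduct.eq_one_of_isCyclic {N G : Type*} [Group N] [Group G]
    {φ : G →* MulAut N} [IsCyclic (N ⋊[φ] G)] : φ = 1 := by
  let := IsCyclic.commGroup (α := N ⋊[φ] G)
  ext g n
  have : inr g * inl n * inr g⁻¹ = (inl n : N ⋊[φ] G) := by
    rw [mul_comm (inr g), mul_assoc, ← map_mul, mul_inv_cancel, map_one, mul_one]
  rwa [← inl_aut, inl_inj] at this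

-- Vacuously true for `n = 0`.
def IsCyclicNumber (n : ℕ) : Prop :=
  ∀ (G : Type) [Group G] [Finite G], Nat.card G = n → IsCyclic G

theorem IsCyclicNumber.of_dvd {d n : ℕ} (h : IsCyclicNumber n) (hd : d ∣ n) (hn : n ≠ 0) :
    IsCyclicNumber d := by
  intro G _ _ hG
  obtain ⟨k, rfl⟩ := hd
  have : NeZero k := ⟨right_ne_zero_of_mul hn⟩
  have hprod := h (G × Multiplicative (ZMod k)) (by simp [hG])
  exact (Group.isCyclic_prod_iff.mp hprod).1

theorem not_isCyclicNumber_mul_self {p : ℕ} (hp : p.Prime) : ¬ IsCyclicNumber (p * p) := by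
  have : NeZero p := ⟨hp.ne_zero⟩
  intro h
  have hprod := h (Multiplicative (ZMod p) × Multiplicative (ZMod p)) (by simp)
  have := (Group.isCyclic_prod_iff.mp hprod).2.2
  simp [hp.ne_one] at this

theorem not_isCyclicNumber_mul_of_dvd_sub_one {p q : ℕ} (hp : p.Prime) (hq : q.Prime)
    (hpq : p ∣ q - 1) : ¬ IsCyclicNumber (q * p) := by
  have : Fact p.Prime := ⟨hp⟩
  have : NeZero q := ⟨hq.ne_zero⟩
  let N := Multiplicative (ZMod q)
  obtain ⟨a, ha⟩ : ∃ a : MulAut N, orderOf a = p := by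
    refine exists_prime_orderOf_dvd_card' p ?_
    rw [IsCyclic.card_mulAut, Nat.card_eq_fintype_card]
    simpa [N, Nat.totient_prime hq] using hpq
  intro h
  let H := Subgroup.zpowers a
  have : Finite (N ⋊[H.subtype] H) := .of_equiv _ SemidirectProduct.equivProd.symm
  have : IsCyclic (N ⋊[H.subtype] H) :=
    h _ (by rw [SemidirectProduct.card, Nat.card_zpowers, ha]; simp [N])
  have hφ : H.subtype = 1 := SemidirectProduct.eq_one_of_isCyclic
  have ha_one : a = 1 := by simpa using congr($hφ ⟨a, Subgroup.mem_zpowers a⟩)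
  exact hp.ne_one (by rw [← ha, ha_one, orderOf_one])

theorem isCyclicNumber_iff_coprime_totient {n : ℕ} (hn : n ≠ 0) :
    IsCyclicNumber n ↔ n.Coprime n.totient := by
  refine ⟨fun h ↦ ?_, fun h G _ _ hG ↦ isCyclic_of_coprime_card_totient (hG ▸ h)⟩
  by_contra hcop
  rcases Nat.exists_primes_of_not_coprime_totient hcop with
    ⟨p, hp, hpn⟩ | ⟨p, q, hp, hq, hpq, hqpn⟩
  · exact not_isCyclicNumber_mul_self hp (h.of_dvd hpn hn)
  · exact not_isCyclicNumber_mul_of_dvd_sub_one hp hq hpq (h.of_dvd hqpn hn)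

/-- For a positive integer `n`, every group with exactly `n` elements is cyclic
if and only if `n` and `φ(n)` are coprime. -/
theorem every_group_of_card_cyclic_iff_coprime_totient (n : ℕ) (hn : 0 < n) :
    (∀ (G : Type) (_ : Group G) (_ : Fintype G), Fintype.card G = n → IsCyclic G) ↔
      Nat.Coprime n (Nat.totient n) := by
  rw [← isCyclicNumber_iff_coprime_totient hn.ne']
  refine ⟨fun h G _ _ hG ↦ ?_, fun h G _ _ hG ↦ h G (by rwa [Nat.card_eq_fintype_card])⟩
  have := Fintype.ofFinite G
  exact h G _ _ (by rwa [← Nat.card_eq_fintype_card])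
end

section
/- If n is a positive integer such that n and φ(n) are NOT coprime, then there exists a group with exactly n elements that is not cyclic. -/
/-!
Let `p` be a prime dividing both `n` and `φ(n)`. Since `φ(n) = ∏ q ^ (k - 1) * (q - 1)` over the
prime powers `q ^ k ∥ n`, either `p ^ 2 ∣ n` or `p ∣ q - 1` for a prime `q ∣ n`. In the first case
`C_p × C_p` has order dividing `n`; in the second, `Aut(C_q) ≅ (ZMod q)ˣ` has an element of
order `p`, and the resulting semidirect product `C_q ⋊ C_p` is nonabelian of order `pq ∣ n`.
Either group, times a cyclic group of the complementary order, is a noncyclic group of order `n`.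
-/

theorem Nat.sq_dvd_or_exists_prime_dvd_sub_one_of_dvd_totient {p n : ℕ} (hp : p.Prime)
    (hpφ : p ∣ n.totient) : p ^ 2 ∣ n ∨ ∃ q, q.Prime ∧ q ∣ n ∧ p ∣ q - 1 := by
  rcases eq_or_ne n 0 with rfl | hn
  · simp
  rw [Nat.totient_eq_prod_factorization hn, hp.prime.dvd_finsuppProd_iff,
    Nat.support_factorization] at hpφ
  obtain ⟨q, hq, hpq⟩ := hpφ
  have hq_prime := Nat.prime_of_mem_primeFactors hq
  rcases hp.prime.dvd_mul.mp hpq with hpow | hsub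
  · obtain rfl : p = q := (Nat.prime_dvd_prime_iff_eq hp hq_prime).mp (hp.dvd_of_dvd_pow hpow)
    have hk : 2 ≤ n.factorization p := by
      by_contra! hk
      have : n.factorization p - 1 = 0 := by omega
      simp [this, hp.ne_one] at hpow
    exact Or.inl ((Nat.pow_dvd_pow p hk).trans (Nat.ordProj_dvd n p))
  · exact Or.inr ⟨q, hq_prime, Nat.dvd_of_mem_primeFactors hq, hsub⟩

theorem not_isCyclic_prod_self (M : Type*) [Group M] [Finite M] [Nontrivial M] :
    ¬IsCyclic (M × M) := fun _ =>
  Finite.one_lt_card.ne' (by simpa using coprime_card_of_isCyclic_prod M M)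

theorem SemidirectProduct.not_isCyclic_of_ne_one {N G : Type*} [Group N] [Group G]
    {φ : G →* MulAut N} (hφ : φ ≠ 1) : ¬IsCyclic (N ⋊[φ] G) := by
  intro hcyc
  let _ := hcyc.commGroup
  refine hφ (MonoidHom.ext fun g => MulEquiv.ext fun n => ?_)
  simpa using congrArg SemidirectProduct.left (mul_comm (inr g) (inl n : N ⋊[φ] G))

theorem exists_not_isCyclic_card_eq_mul_of_prime_dvd_totient (N : Type) [Group N] [Finite N]
    [IsCyclic N] {p : ℕ} (hp : p.Prime) (hpN : p ∣ (Nat.card N).totient) :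
    ∃ (G : Type) (_ : Group G) (_ : Finite G), Nat.card G = Nat.card N * p ∧ ¬IsCyclic G := by
  have := Fact.mk hp
  obtain ⟨σ, hσ⟩ := exists_prime_orderOf_dvd_card' (G := MulAut N) p
    (by rwa [IsCyclic.card_mulAut])
  refine ⟨N ⋊[(Subgroup.zpowers σ).subtype] Subgroup.zpowers σ, inferInstance,
    Finite.of_equiv _ SemidirectProduct.equivProd.symm, ?_, ?_⟩
  · rw [SemidirectProduct.card, Nat.card_zpowers, hσ]
  · refine SemidirectProduct.not_isCyclic_of_ne_one fun h => hp.ne_one ?_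
    have : σ = 1 := DFunLike.congr_fun h (⟨σ, Subgroup.mem_zpowers σ⟩ : Subgroup.zpowers σ)
    rw [← hσ, this, orderOf_one]

theorem exists_not_isCyclic_card_eq_of_card_dvd {H : Type} [Group H] [Finite H]
    (hH : ¬IsCyclic H) {n : ℕ} (hn : n ≠ 0) (hdvd : Nat.card H ∣ n) :
    ∃ (G : Type) (_ : Group G) (_ : Fintype G), Fintype.card G = n ∧ ¬IsCyclic G := by
  obtain ⟨m, rfl⟩ := hdvd
  have : NeZero m := ⟨right_ne_zero_of_mul hn⟩
  refine ⟨H × Multiplicative (ZMod m), inferInstance, Fintype.ofFinite _, ?_, ?_⟩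
  · rw [Fintype.card_eq_nat_card, Nat.card_prod, Nat.card_eq_fintype_card (α := Multiplicative _),
      Fintype.card_multiplicative, ZMod.card]
  · exact fun _ => hH (isCyclic_left_of_prod H (Multiplicative (ZMod m)))

/-- If `n` is a positive integer such that `n` and `φ(n)` are not coprime, then
there exists a group with exactly `n` elements that is not cyclic. -/
theorem exists_noncyclic_group_of_not_coprime_totient (n : ℕ) (hn : 0 < n)
    (hcop : ¬ Nat.Coprime n (Nat.totient n)) :
    ∃ (G : Type) (_ : Group G) (_ : Fintype G), Fintype.card G = n ∧ ¬ IsCyclic G := by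
  obtain ⟨p, hp, hpn, hpφ⟩ := Nat.Prime.not_coprime_iff_dvd.mp hcop
  have := Fact.mk hp
  rcases Nat.sq_dvd_or_exists_prime_dvd_sub_one_of_dvd_totient hp hpφ with hp2 | ⟨q, hq, hqn, hpq⟩
  · refine exists_not_isCyclic_card_eq_of_card_dvd
      (not_isCyclic_prod_self (Multiplicative (ZMod p))) hn.ne' ?_
    simpa [Nat.card_prod, sq] using hp2
  · have := Fact.mk hq
    obtain ⟨G, _, _, hG, hGcyc⟩ := exists_not_isCyclic_card_eq_mul_of_prime_dvd_totient
      (Multiplicative (ZMod q)) hp (by simpa [Nat.totient_prime hq] using hpq)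
    refine exists_not_isCyclic_card_eq_of_card_dvd hGcyc hn.ne' ?_
    have hp_lt_q : p < q :=
      (Nat.le_sub_one_iff_lt hq.pos).mp (Nat.le_of_dvd (Nat.sub_pos_of_lt hq.one_lt) hpq)
    rw [hG, Nat.card_eq_fintype_card, Fintype.card_multiplicative, ZMod.card]
    exact Nat.Coprime.mul_dvd_of_dvd_of_dvd ((Nat.coprime_primes hq hp).mpr hp_lt_q.ne') hqn hpn
end

section
/- For a positive integer n, the numbers n and φ(n) are coprime if and only if n is squarefree and for all primes p and q dividing n, p does not divide q − 1. -/
/-!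
By Euler's product `φ n = ∏ q ^ (k - 1) * (q - 1)` over the prime powers `q ^ k ∥ n`, a
prime `p` divides `φ n` exactly when `p ^ 2 ∣ n` or `p ∣ q - 1` for some prime `q ∣ n`.
Coprimality of `n` and `φ n` says that no prime factor of `n` does either.
-/

namespace Nat

theorem Prime.dvd_totient_of_sq_dvd {p n : ℕ} (hp : p.Prime) (h : p ^ 2 ∣ n) : p ∣ φ n :=
  calc p ∣ φ (p ^ 2) := by simp [totient_prime_pow_succ hp]
    _ ∣ φ n := totient_dvd_of_dvd h

theorem Prime.sub_one_dvd_totient {q n : ℕ} (hq : q.Prime) (h : q ∣ n) : q - 1 ∣ φ n :=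
  totient_prime hq ▸ totient_dvd_of_dvd h

theorem Prime.dvd_totient_iff {p n : ℕ} (hp : p.Prime) :
    p ∣ φ n ↔ p ^ 2 ∣ n ∨ ∃ q, q.Prime ∧ q ∣ n ∧ p ∣ q - 1 := by
  refine ⟨fun h => ?_, ?_⟩
  · rcases eq_or_ne n 0 with rfl | hn
    · exact .inl (dvd_zero _)
    rw [totient_eq_prod_factorization hn, hp.prime.dvd_finsuppProd_iff, support_factorization] at h
    obtain ⟨q, hq, hpq⟩ := h
    rcases hp.prime.dvd_mul.mp hpq with hpow | hsub
    · obtain rfl : p = q :=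
        (prime_dvd_prime_iff_eq hp (prime_of_mem_primeFactors hq)).mp (hp.dvd_of_dvd_pow hpow)
      have hexp : n.factorization p - 1 ≠ 0 := by
        rintro hzero
        rw [hzero, pow_zero] at hpow
        exact hp.not_dvd_one hpow
      exact .inl ((hp.pow_dvd_iff_le_factorization hn).mpr (by omega))
    · exact .inr ⟨q, prime_of_mem_primeFactors hq, dvd_of_mem_primeFactors hq, hsub⟩
  · rintro (hsq | ⟨q, hq, hqn, hpq⟩)
    · exact hp.dvd_totient_of_sq_dvd hsq
    · exact hpq.trans (hq.sub_one_dvd_totient hqn)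

end Nat

theorem coprime_totient_iff_general (n : ℕ) :
    Nat.Coprime n (Nat.totient n) ↔
      Squarefree n ∧
        ∀ p q : ℕ, p.Prime → q.Prime → p ∣ n → q ∣ n → ¬ p ∣ (q - 1) := by
  rw [Nat.squarefree_iff_prime_squarefree]
  constructor
  · intro hcop
    have hndvd (p : ℕ) (hp : p.Prime) (hpn : p ∣ n) : ¬ p ∣ Nat.totient n := fun hpt =>
      hp.ne_one (Nat.eq_one_of_dvd_coprimes hcop hpn hpt)
    refine ⟨fun p hp hsq => ?_, fun p q hp hq hpn hqn hpq => ?_⟩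
    · exact hndvd p hp (dvd_of_mul_left_dvd hsq) (hp.dvd_totient_iff.mpr (.inl (sq p ▸ hsq)))
    · exact hndvd p hp hpn (hp.dvd_totient_iff.mpr (.inr ⟨q, hq, hqn, hpq⟩))
  · rintro ⟨hsf, hsub⟩
    refine Nat.coprime_of_dvd fun p hp hpn hpt => ?_
    rcases hp.dvd_totient_iff.mp hpt with hsq | ⟨q, hq, hqn, hpq⟩
    · exact hsf p hp (sq p ▸ hsq)
    · exact hsub p q hp hq hpn hqn hpq

/-- For a positive integer `n`, the numbers `n` and `φ(n)` are coprime if and only if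
`n` is squarefree and for all primes `p` and `q` dividing `n`, `p` does not divide `q - 1`. -/
theorem coprime_totient_iff (n : ℕ) (hn : 0 < n) :
    Nat.Coprime n (Nat.totient n) ↔
      Squarefree n ∧
        ∀ p q : ℕ, p.Prime → q.Prime → p ∣ n → q ∣ n → ¬ p ∣ (q - 1) :=
  coprime_totient_iff_general n
end

section
/- Let p and q be primes with p dividing q − 1, and let n be a positive integer divisible by p·q. Then there exists a group with exactly n elements that is not cyclic. -/
/-!
Let `H ≤ (ZMod q)ˣ` be the subgroup of order `p`, which exists because `(ZMod q)ˣ` has order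
`q - 1`. It acts faithfully on `ZMod q` by multiplication, so `ZMod q ⋊ H` is a nonabelian group
of order `p * q`. Its product with a cyclic group of order `n / (p * q)` has order `n`, and it is
not cyclic because it maps onto a nonabelian group.
-/

namespace SemidirectProduct

variable {N G : Type*} [Group N] [Group G] {φ : G →* MulAut N}

theorem not_isMulCommutative_of_ne_one (hφ : φ ≠ 1) : ¬ IsMulCommutative (N ⋊[φ] G) := by
  intro hcomm
  obtain ⟨g, hg⟩ : ∃ g, φ g ≠ 1 := by simpa [DFunLike.ext_iff] using hφ
  obtain ⟨x, hx⟩ : ∃ x, φ g x ≠ x := by simpa [MulEquiv.ext_iff] using hg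
  have := congrArg left (hcomm.is_comm.comm (inl x) (inr g))
  simp only [mul_left, left_inl, right_inl, left_inr, right_inr, map_one, mul_one,
    one_mul] at this
  exact hx this.symm

end SemidirectProduct

theorem not_isCyclic_prod_of_not_isMulCommutative {G H : Type*} [Group G] [Group H]
    (hG : ¬ IsMulCommutative G) : ¬ IsCyclic (G × H) := fun _ ↦
  hG (isCyclic_of_surjective (MonoidHom.fst G H) Prod.fst_surjective).isMulCommutative

def Units.toMulAutMultiplicative (R : Type*) [Ring R] : Rˣ →* MulAut (Multiplicative R) :=
  (MulAutMultiplicative R).symm.toMonoidHom.comp (DistribMulAction.toAddAut Rˣ R)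

@[simp]
theorem Units.toMulAutMultiplicative_apply {R : Type*} [Ring R] (u : Rˣ) (x : Multiplicative R) :
    Units.toMulAutMultiplicative R u x = Multiplicative.ofAdd (u * x.toAdd) :=
  rfl

theorem Units.toMulAutMultiplicative_injective (R : Type*) [Ring R] :
    Function.Injective (Units.toMulAutMultiplicative R) := fun u v h ↦
  Units.ext <| by
    simpa using congrArg Multiplicative.toAdd (DFunLike.congr_fun h (Multiplicative.ofAdd 1))

theorem ZMod.exists_subgroup_units_card_eq {p q : ℕ} (hp : p.Prime) (hq : q.Prime)
    (hdvd : p ∣ q - 1) : ∃ H : Subgroup (ZMod q)ˣ, Nat.card H = p := by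
  have : Fact q.Prime := ⟨hq⟩
  have : Fact p.Prime := ⟨hp⟩
  have hcard : Nat.card (ZMod q)ˣ = q - 1 := by rw [Nat.card_eq_fintype_card, ZMod.card_units]
  simpa using Sylow.exists_subgroup_card_pow_prime p (n := 1) (by rwa [pow_one, hcard])

theorem exists_nonabelian_group_card_eq_mul {p q : ℕ} (hp : p.Prime) (hq : q.Prime)
    (hdvd : p ∣ q - 1) :
    ∃ (G : Type) (_ : Group G), Nat.card G = q * p ∧ ¬ IsMulCommutative G := by
  obtain ⟨H, hH⟩ := ZMod.exists_subgroup_units_card_eq hp hq hdvd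
  let φ := (Units.toMulAutMultiplicative (ZMod q)).comp H.subtype
  have hφ_inj : Function.Injective φ :=
    (Units.toMulAutMultiplicative_injective _).comp H.subtype_injective
  have : Nontrivial H := Finite.one_lt_card_iff_nontrivial.mp (hH ▸ hp.one_lt)
  obtain ⟨h, hh⟩ := exists_ne (1 : H)
  have hφ : φ ≠ 1 := fun h1 ↦ hh (hφ_inj ((DFunLike.congr_fun h1 h).trans (map_one φ).symm))
  have hcard : Nat.card (Multiplicative (ZMod q) ⋊[φ] H) = q * p := by
    rw [SemidirectProduct.card, Nat.card_congr Multiplicative.toAdd, Nat.card_zmod, hH]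
  exact ⟨_, inferInstance, hcard, SemidirectProduct.not_isMulCommutative_of_ne_one hφ⟩

/-- Let `p` and `q` be primes with `p` dividing `q - 1`, and let `n` be a positive integer
divisible by `p * q`. Then there exists a group with exactly `n` elements that is not cyclic. -/
theorem exists_noncyclic_group_of_pq_dvd (p q n : ℕ) (hp : p.Prime) (hq : q.Prime)
    (hdvd : p ∣ q - 1) (hn : 0 < n) (hpq : p * q ∣ n) :
    ∃ (G : Type) (_ : Group G) (_ : Fintype G), Fintype.card G = n ∧ ¬ IsCyclic G := by
  obtain ⟨G, _, hG, hGcomm⟩ := exists_nonabelian_group_card_eq_mul hp hq hdvd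
  obtain ⟨m, rfl⟩ := hpq
  have hcard : Nat.card (G × Multiplicative (ZMod m)) = p * q * m := by
    rw [Nat.card_prod, hG, Nat.card_congr Multiplicative.toAdd, Nat.card_zmod]
    ring
  have : Finite (G × Multiplicative (ZMod m)) := Nat.finite_of_card_ne_zero (by omega)
  let _ := Fintype.ofFinite (G × Multiplicative (ZMod m))
  exact ⟨_, inferInstance, inferInstance, Nat.card_eq_fintype_card.symm.trans hcard,
    not_isCyclic_prod_of_not_isMulCommutative hGcomm⟩
end

section
/- Let G be a group, f, h ∈ G, k an integer, and q a positive integer. If h⁻¹·f·h = f^k and h^q belongs to the subgroup ⟨f⟩ of all integer powers of f, then f^(k^q) = f. -/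
/-!
Conjugation by `h ^ n` sends `f` to `f ^ (k ^ n)`. Since `h ^ q` is a power of `f`, it commutes
with `f`, so conjugation by `h ^ q` fixes `f`.
-/

section

variable {G : Type*} [Group G] {f g h : G} {k : ℤ}

theorem inv_mul_zpow_mul_of_inv_mul_mul_eq_zpow (hconj : h⁻¹ * f * h = f ^ k) (m : ℤ) :
    h⁻¹ * f ^ m * h = f ^ (k * m) := by
  rw [zpow_mul, ← hconj]
  simpa using (conj_zpow (a := h⁻¹) (b := f) (i := m)).symm

theorem inv_pow_mul_mul_pow_of_inv_mul_mul_eq_zpow (hconj : h⁻¹ * f * h = f ^ k) (n : ℕ) :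
    (h ^ n)⁻¹ * f * h ^ n = f ^ (k ^ n) := by
  induction n with
  | zero => simp
  | succ n ih =>
    calc (h ^ (n + 1))⁻¹ * f * h ^ (n + 1) = h⁻¹ * ((h ^ n)⁻¹ * f * h ^ n) * h := by group
      _ = f ^ (k ^ (n + 1)) := by
        rw [ih, inv_mul_zpow_mul_of_inv_mul_mul_eq_zpow hconj, pow_succ']

theorem Commute.of_mem_zpowers (hg : g ∈ Subgroup.zpowers f) : Commute g f := by
  obtain ⟨m, rfl⟩ := hg
  exact (Commute.refl f).zpow_left m

end

theorem zpow_pow_eq_self_of_conj_general {G : Type*} [Group G] (f h : G) (k : ℤ) (q : ℕ)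
    (hconj : h⁻¹ * f * h = f ^ k) (hmem : h ^ q ∈ Subgroup.zpowers f) :
    f ^ (k ^ q) = f := by
  rw [← inv_pow_mul_mul_pow_of_inv_mul_mul_eq_zpow hconj q, mul_assoc,
    (Commute.of_mem_zpowers hmem).symm.eq, inv_mul_cancel_left]

/-- Let `G` be a group, `f, h ∈ G`, `k` an integer, and `q` a positive integer.
If `h⁻¹ * f * h = f ^ k` and `h ^ q` belongs to the subgroup `⟨f⟩` of all integer
powers of `f`, then `f ^ (k ^ q) = f`. -/
theorem zpow_pow_eq_self_of_conj {G : Type*} [Group G] (f h : G) (k : ℤ) (q : ℕ)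
    (hq : 0 < q) (hconj : h⁻¹ * f * h = f ^ k) (hmem : h ^ q ∈ Subgroup.zpowers f) :
    f ^ (k ^ q) = f :=
  zpow_pow_eq_self_of_conj_general f h k q hconj hmem
end

section
/- Let G be a finite group, f, h ∈ G, k an integer, and q a positive integer such that h⁻¹·f·h = f^k, h^q belongs to the subgroup ⟨f⟩ of all integer powers of f, and q is coprime to φ(orderOf f). Then f·h = h·f. -/
/-!
Conjugation by `h` raises `f` to the power `k`, so conjugation by `h ^ q` raises it to the power
`k ^ q`. Since `h ^ q` is a power of `f` it centralises `f`, hence `k ^ q ≡ 1` modulo the order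
`n` of `f`. Thus `k` is a unit of `ZMod n` whose order divides both `q` and `φ n`, so `k ≡ 1` and
`h⁻¹ * f * h = f`.
-/

open Nat

theorem ZMod.eq_one_of_pow_eq_one_of_coprime_totient {n q : ℕ} {x : ZMod n} (hq : q ≠ 0)
    (hx : x ^ q = 1) (hcop : q.Coprime (φ n)) : x = 1 := by
  obtain ⟨u, rfl⟩ := IsUnit.of_pow_eq_one hx hq
  have hu : u ^ q = 1 := Units.ext (by simpa using hx)
  simp [(pow_eq_one_iff_of_coprime hcop).mp ⟨hu, ZMod.pow_totient u⟩]

theorem inv_pow_mul_mul_pow_eq_zpow_pow {G : Type*} [Group G] {f h : G} {k : ℤ}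
    (hconj : h⁻¹ * f * h = f ^ k) (m : ℕ) : (h ^ m)⁻¹ * f * h ^ m = f ^ (k ^ m) := by
  induction m with
  | zero => simp
  | succ m ih =>
    calc (h ^ (m + 1))⁻¹ * f * h ^ (m + 1) = h⁻¹ * ((h ^ m)⁻¹ * f * h ^ m) * h := by group
      _ = (h⁻¹ * f * h) ^ k ^ m := by simpa [ih] using (conj_zpow (a := h⁻¹) (b := f)).symm
      _ = f ^ k ^ (m + 1) := by rw [hconj, ← zpow_mul, pow_succ, mul_comm]

theorem zpow_eq_self_of_inv_mul_mul_eq_zpow {G : Type*} [Group G] {f h : G} {k : ℤ} {q : ℕ}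
    (hq : q ≠ 0) (hconj : h⁻¹ * f * h = f ^ k) (hmem : h ^ q ∈ Subgroup.zpowers f)
    (hcop : q.Coprime (φ (orderOf f))) : f ^ k = f := by
  obtain ⟨m, hm : f ^ m = h ^ q⟩ := hmem
  have hfix : (h ^ q)⁻¹ * f * h ^ q = f := by
    rw [← hm, mul_assoc, ← ((Commute.refl f).zpow_left m).eq, inv_mul_cancel_left]
  have hkq : ((k : ZMod (orderOf f))) ^ q = 1 := by
    have : f ^ k ^ q = f ^ (1 : ℤ) := by
      rw [← inv_pow_mul_mul_pow_eq_zpow_pow hconj, hfix, zpow_one]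
    exact_mod_cast (ZMod.intCast_eq_intCast_iff _ _ _).mpr (zpow_eq_zpow_iff_modEq.mp this)
  have hk : (k : ZMod (orderOf f)) = ((1 : ℤ) : ZMod (orderOf f)) := by
    simpa using ZMod.eq_one_of_pow_eq_one_of_coprime_totient hq hkq hcop
  rw [zpow_eq_zpow_iff_modEq.mpr ((ZMod.intCast_eq_intCast_iff _ _ _).mp hk), zpow_one]

theorem commute_of_conj_zpow_general {G : Type*} [Group G] (f h : G) (k : ℤ) (q : ℕ)
    (hq : 0 < q) (hconj : h⁻¹ * f * h = f ^ k) (hmem : h ^ q ∈ Subgroup.zpowers f)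
    (hcop : Nat.Coprime q (Nat.totient (orderOf f))) :
    f * h = h * f := by
  rw [zpow_eq_self_of_inv_mul_mul_eq_zpow hq.ne' hconj hmem hcop] at hconj
  calc f * h = h * (h⁻¹ * f * h) := by group
    _ = h * f := by rw [hconj]

/-- Let `G` be a finite group, `f, h ∈ G`, `k` an integer, and `q` a positive integer such
that `h⁻¹ * f * h = f ^ k`, `h ^ q ∈ ⟨f⟩`, and `q` is coprime to `φ(orderOf f)`.
Then `f * h = h * f`. -/
theorem commute_of_conj_zpow {G : Type*} [Group G] [Fintype G] (f h : G) (k : ℤ) (q : ℕ)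
    (hq : 0 < q) (hconj : h⁻¹ * f * h = f ^ k) (hmem : h ^ q ∈ Subgroup.zpowers f)
    (hcop : Nat.Coprime q (Nat.totient (orderOf f))) :
    f * h = h * f :=
  commute_of_conj_zpow_general f h k q hq hconj hmem hcop
end

section
/- Let G be a finite group and f, h ∈ G with f·h = h·f. Let q be the least positive integer n such that h^n ∈ ⟨f⟩. Then the subgroup of G generated by f and h has exactly q · (orderOf f) elements. -/
/-!
Write `K = ⟨f⟩` and `L = ⟨f, h⟩ = K ⊔ ⟨h⟩`. Since `h` normalizes `K`, `K` is normal in `L` and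
`L / K` is cyclic, generated by the class of `h`, whose order is the least `q > 0` with
`h ^ q ∈ K`. Hence `|L| = [L : K] · |K| = q · orderOf f`.
-/

open scoped Pointwise

namespace Subgroup

variable {G : Type*} [Group G] {K : Subgroup G} {x : G}

theorem relIndex_sup_zpowers_eq (hx : x ∈ normalizer (K : Set G)) {q : ℕ} (hq_pos : 0 < q)
    (hq_mem : x ^ q ∈ K) (hq_min : ∀ m : ℕ, 0 < m → x ^ m ∈ K → q ≤ m) :
    K.relIndex (K ⊔ zpowers x) = q := by
  set L := K ⊔ zpowers x
  have : (K.subgroupOf L).Normal :=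
    normal_subgroupOf_of_le_normalizer (sup_le le_normalizer (zpowers_le.mpr hx))
  let y : L ⧸ K.subgroupOf L := (⟨x, mem_sup_right (mem_zpowers x)⟩ : L)
  have hy_pow {m : ℕ} : y ^ m = 1 ↔ x ^ m ∈ K := by
    rw [← QuotientGroup.mk_pow, QuotientGroup.eq_one_iff, mem_subgroupOf]; rfl
  have hy_top : zpowers y = ⊤ := by
    refine (eq_top_iff' _).mpr ?_
    rintro ⟨⟨g, hg⟩⟩
    have : g ∈ (K : Set G) * (zpowers x : Set G) := by
      rwa [← coe_mul_of_right_le_normalizer_left K _ (zpowers_le.mpr hx)]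
    obtain ⟨k, hk, _, ⟨n, rfl⟩, rfl⟩ := this
    have hk_one : ((⟨k, mem_sup_left hk⟩ : L) : L ⧸ K.subgroupOf L) = 1 :=
      (QuotientGroup.eq_one_iff _).mpr (mem_subgroupOf.mpr hk)
    refine ⟨n, ?_⟩
    change y ^ n = ((⟨k, mem_sup_left hk⟩ * ⟨x, mem_sup_right (mem_zpowers x)⟩ ^ n : L) : L ⧸ _)
    rw [QuotientGroup.mk_mul, hk_one, one_mul, QuotientGroup.mk_zpow]
  calc K.relIndex L = Nat.card (zpowers y) := by rw [hy_top, card_top]; rfl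
    _ = q := by
      rw [Nat.card_zpowers, orderOf_eq_iff hq_pos]
      exact ⟨hy_pow.mpr hq_mem, fun m hm hm_pos h => (hq_min m hm_pos (hy_pow.mp h)).not_gt hm⟩

theorem card_sup_zpowers_eq (hx : x ∈ normalizer (K : Set G)) {q : ℕ} (hq_pos : 0 < q)
    (hq_mem : x ^ q ∈ K) (hq_min : ∀ m : ℕ, 0 < m → x ^ m ∈ K → q ≤ m) :
    Nat.card ↥(K ⊔ zpowers x) = q * Nat.card K := by
  rw [← relIndex_sup_zpowers_eq hx hq_pos hq_mem hq_min, mul_comm, ← relIndex_bot_left,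
    ← relIndex_bot_left, relIndex_mul_relIndex _ _ _ bot_le le_sup_left]

theorem mem_normalizer_zpowers_of_commute {f h : G} (hcomm : Commute f h) :
    h ∈ normalizer (zpowers f : Set G) := by
  refine zpowers_le.mp (le_normalizer_iff.mpr ?_)
  rintro _ ⟨m, rfl⟩ _ ⟨n, rfl⟩
  rw [(hcomm.symm.zpow_zpow m n).eq, mul_inv_cancel_right]
  exact zpow_mem_zpowers f n

theorem closure_pair_eq_sup_zpowers (f h : G) :
    closure ({f, h} : Set G) = zpowers f ⊔ zpowers h := by
  rw [Set.insert_eq, closure_union, zpowers_eq_closure, zpowers_eq_closure]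

end Subgroup

theorem card_closure_pair_eq_general {G : Type*} [Group G] (f h : G)
    (hcomm : f * h = h * f)
    (q : ℕ) (hq_pos : 0 < q) (hq_mem : h ^ q ∈ Subgroup.zpowers f)
    (hq_min : ∀ m : ℕ, 0 < m → h ^ m ∈ Subgroup.zpowers f → q ≤ m) :
    Nat.card (Subgroup.closure ({f, h} : Set G)) = q * orderOf f := by
  rw [Subgroup.closure_pair_eq_sup_zpowers, ← Nat.card_zpowers]
  exact Subgroup.card_sup_zpowers_eq (Subgroup.mem_normalizer_zpowers_of_commute hcomm)
    hq_pos hq_mem hq_min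

/-- Let `G` be a finite group and `f, h ∈ G` with `f * h = h * f`. Let `q` be the least
positive integer `n` such that `h ^ n ∈ ⟨f⟩`. Then the subgroup of `G` generated by
`f` and `h` has exactly `q * orderOf f` elements. -/
theorem card_closure_pair_eq {G : Type*} [Group G] [Fintype G] (f h : G)
    (hcomm : f * h = h * f)
    (q : ℕ) (hq_pos : 0 < q) (hq_mem : h ^ q ∈ Subgroup.zpowers f)
    (hq_min : ∀ m : ℕ, 0 < m → h ^ m ∈ Subgroup.zpowers f → q ≤ m) :
    Nat.card (Subgroup.closure ({f, h} : Set G)) = q * orderOf f :=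
  card_closure_pair_eq_general f h hcomm q hq_pos hq_mem hq_min
end

section
/- Let G be a finite group such that the number of elements of G is coprime to φ of the number of elements of G. Suppose some maximal subgroup F of G is of the form F = ⟨f⟩, and every conjugate b⁻¹·f·b of f (b ∈ G) is an integer power of f. Then G is cyclic. -/
/-!
The conjugation hypothesis makes `⟨f⟩` normal, so `G` acts on it through `Aut ⟨f⟩`, a group of
order `φ |⟨f⟩|`, which divides `φ |G|` and is therefore coprime to `|G|`: the action is trivial and
`f` is central. Maximality of `⟨f⟩` makes `G ⧸ ⟨f⟩` cyclic, so `G` is abelian. Finally `|G|` coprime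
to `φ |G|` forces `|G|` to be squarefree, and an abelian group of squarefree order is cyclic.
-/

/-- A maximal subgroup of a group `G`: a subgroup that is maximal by inclusion among
subgroups of `G` that are proper (`≠ ⊤`) and nontrivial (contain more than one
element, i.e. `≠ ⊥`). -/
def IsMaximalSubgroup {G : Type*} [Group G] (F : Subgroup G) : Prop :=
  F ≠ ⊤ ∧ F ≠ ⊥ ∧ ∀ K : Subgroup G, K ≠ ⊤ → K ≠ ⊥ → F ≤ K → F = K

open Subgroup

theorem Nat.squarefree_of_coprime_totient_s11 {n : ℕ} (h : n.Coprime n.totient) : Squarefree n := by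
  refine Nat.squarefree_iff_prime_squarefree.2 fun p hp hpp => ?_
  have hp_dvd_totient : p ∣ n.totient :=
    calc p ∣ p * p.totient := dvd_mul_right p _
      _ = (p * p).totient := (Nat.totient_mul_of_prime_of_dvd hp dvd_rfl).symm
      _ ∣ n.totient := Nat.totient_dvd_of_dvd hpp
  exact hp.one_lt.ne' (Nat.eq_one_of_dvd_coprimes h (dvd_of_mul_left_dvd hpp) hp_dvd_totient)

theorem Subgroup.zpowers_normal_of_forall_conj_mem {G : Type*} [Group G] {f : G}
    (hconj : ∀ b : G, b⁻¹ * f * b ∈ zpowers f) : (zpowers f).Normal where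
  conj_mem := by
    rintro _ ⟨k, rfl⟩ g
    rw [← conj_zpow]
    simpa using zpow_mem (hconj g⁻¹) k

theorem Subgroup.le_center_of_coprime_card_totient {G : Type*} [Group G] [Finite G]
    (N : Subgroup G) [N.Normal] [IsCyclic N] (h : (Nat.card G).Coprime (Nat.card N).totient) :
    N ≤ center G := by
  intro n hn
  refine mem_center_iff.2 fun g => ?_
  have hconj_trivial : MulAut.conjNormal (H := N) g = 1 := by
    refine orderOf_eq_one_iff.1 (Nat.eq_one_of_dvd_coprimes h ?_ ?_)
    · exact (orderOf_map_dvd _ g).trans (_root_.orderOf_dvd_natCard g)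
    · exact IsCyclic.card_mulAut (G := N) ▸ _root_.orderOf_dvd_natCard _
  have hgn : g * n * g⁻¹ = n := by
    simpa [MulAut.conjNormal_apply] using
      congrArg (fun σ : MulAut N => (σ ⟨n, hn⟩ : G)) hconj_trivial
  exact mul_inv_eq_iff_eq_mul.1 hgn

theorem isCyclic_quotient_of_isMaximalSubgroup {G : Type*} [Group G] {N : Subgroup G} [N.Normal]
    (hN : IsMaximalSubgroup N) : IsCyclic (G ⧸ N) := by
  obtain ⟨hN_top, hN_bot, hN_max⟩ := hN
  obtain ⟨x, hx⟩ : ∃ x, x ∉ N := by simpa [eq_top_iff'] using hN_top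
  set K := (zpowers (x : G ⧸ N)).comap (QuotientGroup.mk' N)
  have hNK : N ≤ K := fun y hy => by simp [K, (QuotientGroup.eq_one_iff y).2 hy]
  have hK : K = ⊤ := by
    by_contra hK
    have hxK : x ∈ K := mem_zpowers (x : G ⧸ N)
    exact hx (hN_max K hK (ne_bot_of_le_ne_bot hN_bot hNK) hNK ▸ hxK)
  refine ⟨x, fun q => ?_⟩
  obtain ⟨y, rfl⟩ := QuotientGroup.mk'_surjective N q
  exact (hK ▸ mem_top y : y ∈ K)

/-- Let `G` be a finite group such that `|G|` is coprime to `φ(|G|)`. Suppose some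
maximal subgroup `F` of `G` is of the form `F = ⟨f⟩`, and every conjugate `b⁻¹ * f * b`
of `f` is an integer power of `f`. Then `G` is cyclic. -/
theorem isCyclic_of_maximal_zpowers_conj_mem {G : Type*} [Group G] [Fintype G]
    (hcop : Nat.Coprime (Fintype.card G) (Nat.totient (Fintype.card G)))
    (f : G) (hmax : IsMaximalSubgroup (Subgroup.zpowers f))
    (hconj : ∀ b : G, b⁻¹ * f * b ∈ Subgroup.zpowers f) :
    IsCyclic G := by
  rw [← Nat.card_eq_fintype_card] at hcop
  have := zpowers_normal_of_forall_conj_mem hconj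
  have hcenter : zpowers f ≤ center G :=
    le_center_of_coprime_card_totient _ <| hcop.coprime_dvd_right <|
      Nat.totient_dvd_of_dvd (card_subgroup_dvd_card _)
  have := isCyclic_quotient_of_isMaximalSubgroup hmax
  let : CommGroup G := commGroupOfCyclicCenterQuotient (QuotientGroup.mk' (zpowers f))
    (by rwa [QuotientGroup.ker_mk'])
  have := IsZGroup.of_squarefree (Nat.squarefree_of_coprime_totient_s11 hcop)
  infer_instance
end

section
/- Let G be a non-commutative group and F₁, F₂ two distinct maximal subgroups of G, each of which is commutative (any two of its elements commute). Then F₁ ∩ F₂ equals the center of G. -/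
open Subgroup

section

variable {G : Type*} [Group G]

theorem IsMaximalSubgroup.eq_of_le {F K : Subgroup G} (hF : IsMaximalSubgroup F)
    (hK : K ≠ ⊤) (hFK : F ≤ K) : F = K :=
  hF.2.2 K hK (fun hbot => hF.2.1 (le_bot_iff.mp (hbot ▸ hFK))) hFK

theorem IsMaximalSubgroup.sup_eq_top {F₁ F₂ : Subgroup G} (h₁ : IsMaximalSubgroup F₁)
    (h₂ : IsMaximalSubgroup F₂) (hne : F₁ ≠ F₂) : F₁ ⊔ F₂ = ⊤ := by
  by_contra hsup
  have hF₂F₁ : F₂ ≤ F₁ := h₁.eq_of_le hsup le_sup_left ▸ le_sup_right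
  exact hne (h₂.eq_of_le h₁.1 hF₂F₁).symm

theorem inf_le_center_of_sup_eq_top {H K : Subgroup G} (hH : H ≤ centralizer H)
    (hK : K ≤ centralizer K) (hsup : H ⊔ K = ⊤) : H ⊓ K ≤ center G := by
  have hHK : H ⊔ K ≤ centralizer (H ⊓ K : Subgroup G) :=
    sup_le (hH.trans (centralizer_le inf_le_left)) (hK.trans (centralizer_le inf_le_right))
  rw [← le_centralizer_iff, hsup, coe_top, centralizer_univ] at hHK
  exact hHK

theorem sup_center_le_centralizer {H : Subgroup G} (hH : H ≤ centralizer H) :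
    H ⊔ center G ≤ centralizer (H ⊔ center G : Subgroup G) := by
  refine sup_le ?_ (center_le_centralizer _)
  rw [le_centralizer_iff]
  exact sup_le hH (center_le_centralizer _)

theorem IsMaximalSubgroup.center_le {F : Subgroup G} (hF : IsMaximalSubgroup F)
    (hFc : F ≤ centralizer F) (hG : center G ≠ ⊤) : center G ≤ F := by
  have hne : F ⊔ center G ≠ ⊤ := by
    intro htop
    have hcomm := sup_center_le_centralizer hFc
    rw [htop, coe_top, centralizer_univ] at hcomm
    exact hG (top_le_iff.mp hcomm)
  rw [hF.eq_of_le hne le_sup_left]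
  exact le_sup_right

end

/-- Let `G` be a non-commutative group and `F₁, F₂` two distinct maximal subgroups
of `G`, each of which is commutative. Then `F₁ ∩ F₂` equals the center of `G`. -/
theorem inf_of_distinct_maximal_comm_eq_center {G : Type*} [Group G]
    (hG : ¬ ∀ a b : G, a * b = b * a)
    (F₁ F₂ : Subgroup G) (hne : F₁ ≠ F₂)
    (hmax₁ : IsMaximalSubgroup F₁) (hmax₂ : IsMaximalSubgroup F₂)
    (hF₁ : ∀ a b : G, a ∈ F₁ → b ∈ F₁ → a * b = b * a)
    (hF₂ : ∀ a b : G, a ∈ F₂ → b ∈ F₂ → a * b = b * a) :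
    F₁ ⊓ F₂ = Subgroup.center G := by
  have hc₁ : F₁ ≤ centralizer F₁ := fun a ha => mem_centralizer_iff.mpr fun b hb => hF₁ b a hb ha
  have hc₂ : F₂ ≤ centralizer F₂ := fun a ha => mem_centralizer_iff.mpr fun b hb => hF₂ b a hb ha
  have hZ : center G ≠ ⊤ := fun htop =>
    hG fun a b => mem_center_iff.mp (htop ▸ mem_top b : b ∈ center G) a
  exact le_antisymm (inf_le_center_of_sup_eq_top hc₁ hc₂ (hmax₁.sup_eq_top hmax₂ hne))
    (le_inf (hmax₁.center_le hc₁ hZ) (hmax₂.center_le hc₂ hZ))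
end

section
/- Let G be a finite group and F a subgroup of G such that the normalizer of F equals F, the center Z of G is contained in F, and for every g ∈ G, if g·F·g⁻¹ ≠ F then (g·F·g⁻¹) ∩ F = Z. Then the number of elements of G that lie in some conjugate of F but not in Z equals (|F| − |Z|) · (|G| / |F|). -/
/-!
The conjugates of `F` pairwise meet exactly in `Z`, which lies in each of them, so removing `Z`
splits their union into disjoint pieces `H \ Z` of size `|F| - |Z|`. As `F` is
self-normalizing, `g F g⁻¹ = h F h⁻¹` iff `g⁻¹ h ∈ F`, so there are exactly
`[G : F] = |G| / |F|` conjugates.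
-/

open Pointwise

theorem Set.ncard_iUnion_sdiff_of_inter_subset {α ι : Type*} [Finite α] {s : ι → Set α}
    {t : Set α} {k : ℕ} (hts : ∀ i, t ⊆ s i) (hcard : ∀ i, (s i).ncard = k)
    (hinter : ∀ i j, s i ≠ s j → s i ∩ s j ⊆ t) :
    ((⋃ i, s i) \ t).ncard = (range s).ncard * (k - t.ncard) := by
  have hdisj : (range s).PairwiseDisjoint (· \ t) := by
    rintro - ⟨i, rfl⟩ - ⟨j, rfl⟩ hij
    exact Set.disjoint_left.2 fun x hi hj => hi.2 (hinter i j hij ⟨hi.1, hj.1⟩)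
  have hpiece : ∀ u ∈ range s, (u \ t).ncard = k - t.ncard := by
    rintro - ⟨i, rfl⟩
    rw [ncard_sdiff (hts i), hcard i]
  rw [iUnion_sdiff, ← biUnion_range (g := (· \ t)),
    (toFinite _).ncard_biUnion (fun _ _ => toFinite _) hdisj, finsum_mem_congr rfl hpiece,
    ← finsum_one (s := range s), finsum_mem_mul]
  simp only [one_mul]

namespace Subgroup

variable {G : Type*} [Group G]

theorem conj_smul_eq_conj_smul_iff {F : Subgroup G} {g h : G} :
    MulAut.conj g • F = MulAut.conj h • F ↔ g⁻¹ * h ∈ normalizer (F : Set G) := by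
  rw [mem_normalizer_iff_map_conj_eq, map_mul, map_inv, eq_comm, ← inv_smul_eq_iff, ← mul_smul]
  rfl

theorem ncard_range_conj_smul (F : Subgroup G) :
    (Set.range fun g : G => MulAut.conj g • F).ncard = (normalizer (F : Set G)).index := by
  rw [← Nat.card_coe_set_eq, index]
  refine (Nat.card_congr ((Quotient.congrRight fun a b => ?_).trans
    (Setoid.quotientKerEquivRange _))).symm
  rw [QuotientGroup.leftRel_apply, Setoid.ker_def, conj_smul_eq_conj_smul_iff]

theorem ncard_coe_conj_smul (F : Subgroup G) (g : G) :
    ((MulAut.conj g • F : Subgroup G) : Set G).ncard = Nat.card F := by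
  rw [coe_pointwise_smul, Set.ncard_smul_set, ← Nat.card_coe_set_eq, SetLike.coe_sort_coe]

theorem Normal.le_conj_smul_of_le {N F : Subgroup G} [N.Normal] (hNF : N ≤ F) (g : G) :
    N ≤ MulAut.conj g • F :=
  Normal.conj_smul_eq_self g N ▸ pointwise_smul_le_pointwise_smul_iff.2 hNF

theorem conj_smul_inf_conj_smul_eq {F N : Subgroup G} [N.Normal]
    (hF : ∀ g : G, MulAut.conj g • F ≠ F → MulAut.conj g • F ⊓ F = N) {g h : G}
    (hne : MulAut.conj g • F ≠ MulAut.conj h • F) :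
    MulAut.conj g • F ⊓ MulAut.conj h • F = N := by
  have hg : MulAut.conj g • F = MulAut.conj h • MulAut.conj (h⁻¹ * g) • F := by
    rw [← mul_smul, ← map_mul, mul_inv_cancel_left]
  rw [hg] at hne ⊢
  rw [← smul_inf, hF _ fun he => hne (by rw [he]), Normal.conj_smul_eq_self]

end Subgroup

/-- Let `G` be a finite group and `F` a subgroup of `G` such that the normalizer of `F`
equals `F`, the center `Z` of `G` is contained in `F`, and for every `g ∈ G`, if
`g·F·g⁻¹ ≠ F` then `(g·F·g⁻¹) ∩ F = Z`. Then the number of elements of `G` lying in some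
conjugate of `F` but not in `Z` equals `(|F| - |Z|) * (|G| / |F|)`. -/
theorem card_union_conjugates_sdiff_center {G : Type*} [Group G] [Fintype G]
    (F : Subgroup G)
    (hnorm : Subgroup.normalizer (F : Set G) = F)
    (hZle : Subgroup.center G ≤ F)
    (hint : ∀ g : G, Subgroup.map (MulAut.conj g).toMonoidHom F ≠ F →
      Subgroup.map (MulAut.conj g).toMonoidHom F ⊓ F = Subgroup.center G) :
    Nat.card
        ((⋃ g : G, ((Subgroup.map (MulAut.conj g).toMonoidHom F : Subgroup G) : Set G)) \
          (Subgroup.center G : Set G) : Set G) =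
      (Nat.card F - Nat.card (Subgroup.center G)) * (Nat.card G / Nat.card F) := by
  have hinter (g h : G)
      (hne : ((MulAut.conj g • F : Subgroup G) : Set G) ≠ ↑(MulAut.conj h • F)) :
      ((MulAut.conj g • F : Subgroup G) : Set G) ∩ ↑(MulAut.conj h • F) ⊆
        Subgroup.center G :=
    (Subgroup.conj_smul_inf_conj_smul_eq hint fun he => hne (by rw [he])).le
  have hconj : (Set.range fun g : G => ((MulAut.conj g • F : Subgroup G) : Set G)).ncard =
      Nat.card G / Nat.card F := by
    rw [Set.range_comp' SetLike.coe, Set.ncard_image_of_injective _ SetLike.coe_injective,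
      Subgroup.ncard_range_conj_smul, hnorm, ← F.card_mul_index,
      Nat.mul_div_cancel_left _ Nat.card_pos]
  change Nat.card ↥((⋃ g : G, ((MulAut.conj g • F : Subgroup G) : Set G)) \ _ : Set G) = _
  rw [Nat.card_coe_set_eq, Set.ncard_iUnion_sdiff_of_inter_subset
      (Subgroup.Normal.le_conj_smul_of_le hZle) (Subgroup.ncard_coe_conj_smul F) hinter,
    hconj, ← Nat.card_coe_set_eq, SetLike.coe_sort_coe, mul_comm]
end

section
/- There is no finite non-commutative group G in which every maximal subgroup is commutative and every maximal subgroup equals its own normalizer. -/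
/-!
A self-normalizing proper subgroup `M` contains the center `Z` properly, and when the maximal
subgroups are commutative, the centralizer of a non-central `x` is the unique maximal subgroup
containing `x`. Sorting the non-central elements by the conjugacy class of their centralizer,
the class of a maximal `M` accounts for `[G : M] (|M| - |Z|) = |G| - [G : M] |Z| ≥ |G| / 2`
of them. One class cannot cover all `|G| - |Z|` non-central elements, since that forces
`[G : M] = 1`, and two classes together are already too many.
-/

open scoped Pointwise
open Finset Subgroup MulAction

variable {G : Type*} [Group G]

namespace IsMaximalSubgroup

variable {M : Subgroup G}

theorem of_isCoatom (h : IsCoatom M) (hbot : M ≠ ⊥) : IsMaximalSubgroup M :=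
  ⟨h.1, hbot, fun K hK _ hle => hle.eq_or_lt.resolve_right fun hlt => hK (h.2 K hlt)⟩

theorem exists_ge [Finite G] {K : Subgroup G} (htop : K ≠ ⊤) (hbot : K ≠ ⊥) :
    ∃ M, IsMaximalSubgroup M ∧ K ≤ M := by
  obtain ⟨M, hM, hKM⟩ := (eq_top_or_exists_le_coatom K).resolve_left htop
  exact ⟨M, of_isCoatom hM (ne_bot_of_le_ne_bot hbot hKM), hKM⟩

theorem smul {α : Type*} [Group α] [MulDistribMulAction α G] (hM : IsMaximalSubgroup M)
    (a : α) :
    IsMaximalSubgroup (a • M) := by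
  have smul_top : ∀ b : α, b • (⊤ : Subgroup G) = ⊤ := fun b =>
    top_unique fun x _ => mem_pointwise_smul_iff_inv_smul_mem.2 trivial
  obtain ⟨htop, hbot, hmax⟩ := hM
  refine ⟨?_, ?_, fun K hKtop hKbot hle => ?_⟩
  · rwa [Ne, ← smul_top a, smul_left_cancel_iff]
  · rwa [Ne, ← smul_bot a, smul_left_cancel_iff]
  · rw [← smul_inv_smul a K, ← hmax (a⁻¹ • K) ?_ ?_ (pointwise_smul_subset_iff.1 hle)]
    · rwa [Ne, ← smul_top a⁻¹, smul_left_cancel_iff]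
    · rwa [Ne, ← smul_bot a⁻¹, smul_left_cancel_iff]

theorem centralizer_eq_iff [IsMulCommutative M] (hM : IsMaximalSubgroup M) {x : G}
    (hx : x ∉ center G) : centralizer {x} = M ↔ x ∈ M := by
  refine ⟨fun h => h ▸ mem_centralizer_singleton_iff.2 rfl, fun hxM => ?_⟩
  have hle : M ≤ centralizer {x} :=
    (le_centralizer M).trans (centralizer_le (Set.singleton_subset_iff.2 hxM))
  refine (hM.2.2 _ ?_ (ne_bot_of_le_ne_bot hM.2.1 hle) hle).symm
  rwa [Ne, centralizer_eq_top_iff_subset, Set.singleton_subset_iff]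

theorem ncard_centralizer_eq_add [Finite G] [IsMulCommutative M] (hM : IsMaximalSubgroup M)
    (hZ : center G ≤ M) :
    {x | x ∉ center G ∧ centralizer {x} = M}.ncard + Nat.card (center G) = Nat.card M := by
  have hset : {x | x ∉ center G ∧ centralizer {x} = M} = (M : Set G) \ center G := by
    ext x
    exact (and_congr_right hM.centralizer_eq_iff).trans and_comm
  rw [hset, show Nat.card (center G) = (center G : Set G).ncard from Nat.card_coe_set_eq _,
    show Nat.card M = (M : Set G).ncard from Nat.card_coe_set_eq _]
  exact Set.ncard_sdiff_add_ncard_of_subset hZ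

end IsMaximalSubgroup

namespace Subgroup

theorem two_mul_card_le_card_of_lt {H K : Subgroup G} [Finite K] (h : H < K) :
    2 * Nat.card H ≤ Nat.card K := by
  have hmul := relIndex_mul_relIndex ⊥ H K bot_le h.le
  rw [relIndex_bot_left, relIndex_bot_left] at hmul
  have h1 : H.relIndex K ≠ 1 := by rw [Ne, relIndex_eq_one]; exact h.not_ge
  have h0 : H.relIndex K ≠ 0 := by
    rintro h0
    rw [h0, mul_zero] at hmul
    exact (Nat.card_pos (α := K)).ne' hmul.symm
  rw [← hmul, mul_comm 2]
  exact Nat.mul_le_mul_left _ (by omega)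

theorem center_lt_of_normalizer_eq {H : Subgroup G} (hH : normalizer (H : Set G) = H)
    (htop : H ≠ ⊤) : center G < H := by
  refine (hH ▸ center_le_normalizer (H : Set G)).lt_of_ne fun h => htop ?_
  rw [← hH, normalizer_eq_top_iff, ← h]
  infer_instance

theorem ncard_orbit_conjAct (H : Subgroup G) :
    (orbit (ConjAct G) H).ncard = (normalizer (H : Set G)).index := by
  rw [← index_stabilizer, ← index_comap_of_surjective _
    (f := (ConjAct.toConjAct : G ≃* ConjAct G).toMonoidHom) ConjAct.toConjAct.surjective]
  congr 1
  ext g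
  exact conjAct_pointwise_smul_iff

end Subgroup

theorem isMaximalSubgroup_centralizer [Finite G]
    (hcomm : ∀ M : Subgroup G, IsMaximalSubgroup M → IsMulCommutative M) {x : G}
    (hx : x ∉ center G) : IsMaximalSubgroup (centralizer {x}) := by
  have hxC : x ∈ centralizer {x} := mem_centralizer_singleton_iff.2 rfl
  have htop : centralizer {x} ≠ ⊤ := by
    rwa [Ne, centralizer_eq_top_iff_subset, Set.singleton_subset_iff]
  have hbot : centralizer {x} ≠ ⊥ := by
    rintro h
    rw [h, mem_bot] at hxC
    exact hx (hxC ▸ one_mem _)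
  obtain ⟨M, hM, hle⟩ := IsMaximalSubgroup.exists_ge htop hbot
  have := hcomm M hM
  rwa [(hM.centralizer_eq_iff hx).2 (hle hxC)]

theorem ncard_centralizer_mem_orbit_add [Finite G]
    (hcomm : ∀ M : Subgroup G, IsMaximalSubgroup M → IsMulCommutative M)
    (hnorm : ∀ M : Subgroup G, IsMaximalSubgroup M → normalizer (M : Set G) = M)
    {M : Subgroup G} (hM : IsMaximalSubgroup M) :
    {x | x ∉ center G ∧ centralizer {x} ∈ orbit (ConjAct G) M}.ncard +
      M.index * Nat.card (center G) = Nat.card G := by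
  classical
  have : Fintype G := Fintype.ofFinite G
  have hO : (orbit (ConjAct G) M).Finite := Set.toFinite _
  have hcard : #hO.toFinset = M.index := by
    rw [← Set.ncard_eq_toFinset_card _ hO, ncard_orbit_conjAct, hnorm M hM]
  have hfiber : ∀ N ∈ hO.toFinset,
      {x | x ∉ center G ∧ centralizer {x} = N}.ncard + Nat.card (center G) = Nat.card M := by
    intro N hN
    obtain ⟨g, rfl⟩ := hO.mem_toFinset.1 hN
    have hgM := hM.smul g
    have := hcomm _ hgM
    rw [hgM.ncard_centralizer_eq_add (center_lt_of_normalizer_eq (hnorm _ hgM) hgM.1).le]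
    exact Nat.card_congr (equivSMul g M).toEquiv.symm
  have hsum : {x | x ∉ center G ∧ centralizer {x} ∈ orbit (ConjAct G) M}.ncard =
      ∑ N ∈ hO.toFinset, {x | x ∉ center G ∧ centralizer {x} = N}.ncard := by
    simp_rw [Set.ncard_eq_toFinset_card', Set.toFinset_ofPred]
    rw [Finset.card_eq_sum_card_fiberwise (f := fun x => centralizer {x}) (t := hO.toFinset)]
    · refine Finset.sum_congr rfl fun N hN => ?_
      rw [Finset.filter_filter]
      refine congrArg card (filter_congr fun x _ => ⟨fun h => ⟨h.1.1, h.2⟩, fun h => ?_⟩)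
      exact ⟨⟨h.1, h.2 ▸ hO.mem_toFinset.1 hN⟩, h.2⟩
    · intro x hx
      simpa using (Finset.mem_filter.1 hx).2.2
  rw [hsum, ← hcard, ← smul_eq_mul, ← Finset.sum_const, ← Finset.sum_add_distrib,
    Finset.sum_congr rfl hfiber, Finset.sum_const, hcard, smul_eq_mul, index_mul_card]

theorem card_le_two_mul_ncard_centralizer_mem_orbit [Finite G]
    (hcomm : ∀ M : Subgroup G, IsMaximalSubgroup M → IsMulCommutative M)
    (hnorm : ∀ M : Subgroup G, IsMaximalSubgroup M → normalizer (M : Set G) = M)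
    {M : Subgroup G} (hM : IsMaximalSubgroup M) :
    Nat.card G ≤ 2 * {x | x ∉ center G ∧ centralizer {x} ∈ orbit (ConjAct G) M}.ncard := by
  have hcount := ncard_centralizer_mem_orbit_add hcomm hnorm hM
  have hZM := two_mul_card_le_card_of_lt (center_lt_of_normalizer_eq (hnorm M hM) hM.1)
  have hindex := M.index_mul_card
  nlinarith

theorem exists_centralizer_notMem_orbit [Finite G]
    (hcomm : ∀ M : Subgroup G, IsMaximalSubgroup M → IsMulCommutative M)
    (hnorm : ∀ M : Subgroup G, IsMaximalSubgroup M → normalizer (M : Set G) = M)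
    {M : Subgroup G} (hM : IsMaximalSubgroup M) :
    ∃ x ∉ center G, centralizer {x} ∉ orbit (ConjAct G) M := by
  by_contra! hall
  have hcover :
      {x | x ∉ center G ∧ centralizer {x} ∈ orbit (ConjAct G) M} = (center G : Set G)ᶜ :=
    Set.ext fun x => ⟨And.left, fun hx => ⟨hx, hall x hx⟩⟩
  have hcount := ncard_centralizer_mem_orbit_add hcomm hnorm hM
  have hcompl := Set.ncard_add_ncard_compl (center G : Set G)
  rw [hcover] at hcount
  rw [← Nat.card_coe_set_eq] at hcompl
  have hZpos := Nat.card_pos (α := center G)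
  have hindex : M.index = 1 := by nlinarith
  exact hM.1 (index_eq_one.1 hindex)

theorem center_eq_top_of_forall_isMaximalSubgroup [Finite G]
    (hcomm : ∀ M : Subgroup G, IsMaximalSubgroup M → IsMulCommutative M)
    (hnorm : ∀ M : Subgroup G, IsMaximalSubgroup M → normalizer (M : Set G) = M) :
    center G = ⊤ := by
  by_contra hZ
  obtain ⟨x₀, -, hx₀⟩ := SetLike.exists_of_lt (lt_top_iff_ne_top.2 hZ)
  have hM₀ := isMaximalSubgroup_centralizer hcomm hx₀
  obtain ⟨x₁, hx₁, hM₁⟩ := exists_centralizer_notMem_orbit hcomm hnorm hM₀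
  let S (M : Subgroup G) : Set G := {x | x ∉ center G ∧ centralizer {x} ∈ orbit (ConjAct G) M}
  have hdisj : Disjoint (S (centralizer {x₀})) (S (centralizer {x₁})) := by
    refine Set.disjoint_left.2 fun x hx₀ hx₁ => hM₁ ?_
    rw [← orbit_eq_iff.2 hx₀.2, orbit_eq_iff.2 hx₁.2]
    exact mem_orbit_self _
  have hsub : S (centralizer {x₀}) ∪ S (centralizer {x₁}) ⊆ (center G : Set G)ᶜ :=
    Set.union_subset (fun _ hx => hx.1) (fun _ hx => hx.1)
  have hle := Set.ncard_le_ncard hsub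
  rw [Set.ncard_union_eq hdisj] at hle
  have h₀ : Nat.card G ≤ 2 * (S (centralizer {x₀})).ncard :=
    card_le_two_mul_ncard_centralizer_mem_orbit hcomm hnorm hM₀
  have h₁ : Nat.card G ≤ 2 * (S (centralizer {x₁})).ncard :=
    card_le_two_mul_ncard_centralizer_mem_orbit hcomm hnorm
      (isMaximalSubgroup_centralizer hcomm hx₁)
  have hcompl := Set.ncard_add_ncard_compl (center G : Set G)
  have hZpos := (Set.ncard_pos (center G : Set G).toFinite).2 ⟨1, one_mem _⟩
  omega

/-- There is no finite non-commutative group `G` in which every maximal subgroup is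
commutative and every maximal subgroup equals its own normalizer. -/
theorem no_finite_noncomm_group_with_comm_selfnormalizing_maximals :
    ¬ ∃ (G : Type) (_ : Group G) (_ : Fintype G),
        (¬ ∀ a b : G, a * b = b * a) ∧
        (∀ F : Subgroup G, IsMaximalSubgroup F →
          (∀ a b : G, a ∈ F → b ∈ F → a * b = b * a) ∧ Subgroup.normalizer (F : Set G) = F) := by
  rintro ⟨G, _, _, hnc, hmax⟩
  have hZ := center_eq_top_of_forall_isMaximalSubgroup
    (fun M hM => ⟨⟨fun a b => Subtype.ext ((hmax M hM).1 a b a.2 b.2)⟩⟩)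
    (fun M hM => (hmax M hM).2)
  exact hnc fun a b => (mem_center_iff.1 (hZ ▸ mem_top a) b).symm
end
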